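/- Let 0 < λ ≤ Λ and Θ = Λ²(Λ+λ)/λ³, and let A be a 2×2 real symmetric matrix with λ|ξ|² ≤ ξᵀAξ ≤ Λ|ξ|². Then the matrix B₂ = (a₁₁/a₂₂ − Θ, a₁₂/a₂₂; a₁₂/a₂₂, 1 − Θ) satisfies det(B₂) ≥ 0 and Tr(B₂) ≤ 0; in particular B₂ is negative semidefinite. -/

import Mathlib

/-!
Ellipticity gives `λ ≤ a₁₁, a₂₂ ≤ Λ` and `a₁₂² ≤ a₁₁a₂₂`, so with `r = Λ/λ ≥ 1` the entries
`p = a₁₁/a₂₂`, `q = a₁₂/a₂₂` satisfy `q² ≤ p ≤ r`, while `Θ = r³ + r²`. Then `Θ - p ≥ r³ + r² - r ≥ r`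
and `Θ - 1 ≥ 1`, so `det B₂ = (Θ - p)(Θ - 1) - q² ≥ r - q² ≥ 0`, and `Tr B₂ = p + 1 - 2Θ ≤ 0` is clear.
A symmetric `2 × 2` matrix with nonnegative determinant and nonpositive trace is negative semidefinite.
-/

lemma sq_le_mul_of_forall_quadForm_nonneg {a b c : ℝ}
    (h : ∀ ξ : ℝ × ℝ, 0 ≤ a * ξ.1 ^ 2 + 2 * b * ξ.1 * ξ.2 + c * ξ.2 ^ 2) : b ^ 2 ≤ a * c := by
  have hdisc : discrim a (2 * b) c ≤ 0 := discrim_le_zero fun x => by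
    simpa [sq, mul_assoc] using h (x, 1)
  rw [discrim] at hdisc
  linarith

lemma quadForm_nonpos_of_trace_nonpos_of_det_nonneg {a b c : ℝ}
    (htr : a + c ≤ 0) (hdet : 0 ≤ a * c - b ^ 2) (ξ : ℝ × ℝ) :
    a * ξ.1 ^ 2 + 2 * b * ξ.1 * ξ.2 + c * ξ.2 ^ 2 ≤ 0 := by
  have ha : a ≤ 0 := by nlinarith [sq_nonneg b]
  have hc : c ≤ 0 := by nlinarith [sq_nonneg b]
  rcases ha.lt_or_eq with ha | rfl
  · -- completing the square: `a · Q(ξ) = (a ξ₁ + b ξ₂)² + (ac - b²) ξ₂²`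
    have hcompl : 0 ≤ a * (a * ξ.1 ^ 2 + 2 * b * ξ.1 * ξ.2 + c * ξ.2 ^ 2) := by
      nlinarith [sq_nonneg (a * ξ.1 + b * ξ.2), mul_nonneg hdet (sq_nonneg ξ.2)]
    exact nonpos_of_mul_nonneg_right hcompl ha
  · have hb : b = 0 := by nlinarith [sq_nonneg b]
    subst hb
    nlinarith [sq_nonneg ξ.2]

lemma sub_mul_sub_sub_sq_nonneg {p q r : ℝ} (hr : 1 ≤ r) (hp : p ≤ r) (hq : q ^ 2 ≤ p) :
    0 ≤ (p - (r ^ 3 + r ^ 2)) * (1 - (r ^ 3 + r ^ 2)) - q ^ 2 := by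
  have h₁ : r ≤ r ^ 3 + r ^ 2 - p := by nlinarith [mul_nonneg (sub_nonneg.2 hr) (sub_nonneg.2 hr)]
  have h₂ : 1 ≤ r ^ 3 + r ^ 2 - 1 := by nlinarith
  nlinarith [mul_le_mul h₁ h₂ zero_le_one (by linarith)]

lemma add_sub_add_le_zero {p r : ℝ} (hr : 1 ≤ r) (hp : p ≤ r) :
    (p - (r ^ 3 + r ^ 2)) + (1 - (r ^ 3 + r ^ 2)) ≤ 0 := by
  nlinarith

lemma div_sq_le_div_of_sq_le_mul {a b c : ℝ} (hc : 0 < c) (h : b ^ 2 ≤ a * c) :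
    (b / c) ^ 2 ≤ a / c := by
  rw [div_pow, div_le_div_iff₀ (by positivity) hc]
  nlinarith

theorem B2_nsd_general (lam Lam a11 a12 a22 : ℝ)
    (hlam : 0 < lam)
    (hell : ∀ ξ : ℝ × ℝ,
      lam * (ξ.1 ^ 2 + ξ.2 ^ 2) ≤ a11 * ξ.1 ^ 2 + 2 * a12 * ξ.1 * ξ.2 + a22 * ξ.2 ^ 2 ∧
      a11 * ξ.1 ^ 2 + 2 * a12 * ξ.1 * ξ.2 + a22 * ξ.2 ^ 2 ≤ Lam * (ξ.1 ^ 2 + ξ.2 ^ 2)) :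
    (a11 / a22 - Lam ^ 2 * (Lam + lam) / lam ^ 3) * (1 - Lam ^ 2 * (Lam + lam) / lam ^ 3)
        - (a12 / a22) ^ 2 ≥ 0 ∧
    (a11 / a22 - Lam ^ 2 * (Lam + lam) / lam ^ 3) + (1 - Lam ^ 2 * (Lam + lam) / lam ^ 3) ≤ 0 ∧
    ∀ ξ : ℝ × ℝ, (a11 / a22 - Lam ^ 2 * (Lam + lam) / lam ^ 3) * ξ.1 ^ 2
        + 2 * (a12 / a22) * ξ.1 * ξ.2
        + (1 - Lam ^ 2 * (Lam + lam) / lam ^ 3) * ξ.2 ^ 2 ≤ 0 := by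
  obtain ⟨h11l, h11u⟩ : lam ≤ a11 ∧ a11 ≤ Lam := by simpa using hell (1, 0)
  obtain ⟨h22l, h22u⟩ : lam ≤ a22 ∧ a22 ≤ Lam := by simpa using hell (0, 1)
  have ha22 : 0 < a22 := hlam.trans_le h22l
  have hoff : a12 ^ 2 ≤ a11 * a22 := sq_le_mul_of_forall_quadForm_nonneg fun ξ =>
    (mul_nonneg hlam.le (by positivity)).trans (hell ξ).1
  have hΘ : Lam ^ 2 * (Lam + lam) / lam ^ 3 = (Lam / lam) ^ 3 + (Lam / lam) ^ 2 := by
    field_simp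
  have hr : 1 ≤ Lam / lam := (one_le_div hlam).2 (h11l.trans h11u)
  have hp : a11 / a22 ≤ Lam / lam := div_le_div₀ (hlam.le.trans (h11l.trans h11u)) h11u hlam h22l
  have hq : (a12 / a22) ^ 2 ≤ a11 / a22 := div_sq_le_div_of_sq_le_mul ha22 hoff
  have hdet := sub_mul_sub_sub_sq_nonneg hr hp hq
  have htr := add_sub_add_le_zero (p := a11 / a22) hr hp
  rw [hΘ]
  exact ⟨hdet, htr, quadForm_nonpos_of_trace_nonpos_of_det_nonneg htr hdet⟩

/-- With `Θ = Λ²(Λ+λ)/λ³`, the matrix `B₂ = (a₁₁/a₂₂ − Θ, a₁₂/a₂₂; a₁₂/a₂₂, 1 − Θ)`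
satisfies `det(B₂) ≥ 0` and `Tr(B₂) ≤ 0`; in particular `B₂` is negative semidefinite. -/
theorem B2_nsd (lam Lam a11 a12 a22 : ℝ)
    (hlam : 0 < lam) (hlL : lam ≤ Lam)
    (hell : ∀ ξ : ℝ × ℝ,
      lam * (ξ.1 ^ 2 + ξ.2 ^ 2) ≤ a11 * ξ.1 ^ 2 + 2 * a12 * ξ.1 * ξ.2 + a22 * ξ.2 ^ 2 ∧
      a11 * ξ.1 ^ 2 + 2 * a12 * ξ.1 * ξ.2 + a22 * ξ.2 ^ 2 ≤ Lam * (ξ.1 ^ 2 + ξ.2 ^ 2)) :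
    (a11 / a22 - Lam ^ 2 * (Lam + lam) / lam ^ 3) * (1 - Lam ^ 2 * (Lam + lam) / lam ^ 3)
        - (a12 / a22) ^ 2 ≥ 0 ∧
    (a11 / a22 - Lam ^ 2 * (Lam + lam) / lam ^ 3) + (1 - Lam ^ 2 * (Lam + lam) / lam ^ 3) ≤ 0 ∧
    ∀ ξ : ℝ × ℝ, (a11 / a22 - Lam ^ 2 * (Lam + lam) / lam ^ 3) * ξ.1 ^ 2
        + 2 * (a12 / a22) * ξ.1 * ξ.2
        + (1 - Lam ^ 2 * (Lam + lam) / lam ^ 3) * ξ.2 ^ 2 ≤ 0 :=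
  B2_nsd_general lam Lam a11 a12 a22 hlam hell
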